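/- Let 𝒱 ⊂ ℝ³ be the set of the N = 12 vertices of the truncated tetrahedron: all permutations of the coordinates of (1,1,3) with an even number of minus signs. Then max_{v ∈ 𝒱^N̲} |⟨v⟩|₂² = 25168. Consequently, for the unit-normalized ensemble 𝒱/√11 one has g = 25168/11, and its minimum guesswork is (1/2)·(13 − √(25168/11)/12) ≈ 4.5070. -/

import Mathlib

open Pointwise

noncomputable section

abbrev E3 := EuclideanSpace ℝ (Fin 3)

/-- The vector `(a, b, c)` in ℝ³ with the Euclidean norm. -/
def vec3 (a b c : ℝ) : E3 := (WithLp.equiv 2 (Fin 3 → ℝ)).symm ![a, b, c]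

/-- `⟨v⟩ := Σ_{i=1}^N (2i − N + 1)·vᵢ` (here `i : Fin N` is 0-based, so the
coefficient reads `2(i+1) − N + 1 = 2i + 3 − N`). -/
def tupleAvg (N : ℕ) (v : Fin N → E3) : E3 :=
  ∑ i : Fin N, (2 * (i : ℝ) + 3 - N) • v i

/-- The set of values `|⟨v⟩|₂²` as `v` ranges over the `N`-tuples on `𝒱` without
repetition (i.e. bijective enumerations of `𝒱`). -/
def normSqSet (𝒱 : Set E3) (N : ℕ) : Set ℝ :=
  {x | ∃ v : Fin N → E3, Function.Injective v ∧ Set.range v = 𝒱 ∧ x = ‖tupleAvg N v‖ ^ 2}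

/-- All coordinate permutations of `(1, 1, 3)` with an even number of minus signs. -/
def truncatedTetrahedron : Set E3 :=
  {v | ∃ σ : Equiv.Perm (Fin 3), ∃ s : Fin 3 → ℝ, (∀ i, s i = 1 ∨ s i = -1) ∧
       s 0 * s 1 * s 2 = 1 ∧
       v = (WithLp.equiv 2 (Fin 3 → ℝ)).symm (fun i => s i * ![1, 1, 3] (σ i))}

-- ===== auxiliary lemmas =====
open scoped RealInnerProductSpace

lemma vec3_add (a b c d e f : ℝ) : vec3 a b c + vec3 d e f = vec3 (a+d) (b+e) (c+f) := by
  unfold vec3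
  rw [WithLp.equiv_symm_apply, ← WithLp.toLp_add]
  congr 1
  rw [Matrix.cons_add_cons, Matrix.cons_add_cons, Matrix.cons_add_cons, Matrix.empty_add_empty]

lemma vec3_smul (r a b c : ℝ) : r • vec3 a b c = vec3 (r*a) (r*b) (r*c) := by
  unfold vec3
  rw [WithLp.equiv_symm_apply, ← WithLp.toLp_smul]
  congr 1
  rw [Matrix.smul_cons, Matrix.smul_cons, Matrix.smul_cons, Matrix.smul_empty]
  simp [smul_eq_mul]

lemma vec3_neg (a b c : ℝ) : -vec3 a b c = vec3 (-a) (-b) (-c) := by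
  have := vec3_smul (-1) a b c
  simp at this
  simpa using this

lemma vec3_zero : vec3 0 0 0 = 0 := by
  unfold vec3
  rw [show ![(0:ℝ),0,0] = 0 from by funext i; fin_cases i <;> rfl]
  simp

lemma vec3_ext (a b c d e f : ℝ) : vec3 a b c = vec3 d e f ↔ a = d ∧ b = e ∧ c = f := by
  constructor
  · intro h
    have h' := (WithLp.equiv 2 (Fin 3 → ℝ)).symm.injective h
    exact ⟨congrFun h' 0, congrFun h' 1, congrFun h' 2⟩
  · rintro ⟨rfl, rfl, rfl⟩; rfl

lemma inner_vec3 (a b c : ℝ) (z : E3) : ⟪vec3 a b c, z⟫ = a * z 0 + b * z 1 + c * z 2 := by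
  simp [PiLp.inner_apply, Fin.sum_univ_three, vec3]
  ring

lemma norm_sq_z (z : E3) : ‖z‖^2 = z 0 * z 0 + z 1 * z 1 + z 2 * z 2 := by
  rw [← real_inner_self_eq_norm_sq]
  simp only [PiLp.inner_apply, Fin.sum_univ_three, RCLike.inner_apply, conj_trivial]

/-- The twelve vertices, ordered so that the inner product with `(3,2,0)` is `2*i - 11`. -/
def tw : Fin 12 → E3 :=
  ![vec3 (-3) (-1) 1, vec3 (-1) (-3) 1, vec3 (-3) 1 (-1), vec3 (-1) (-1) 3,
    vec3 1 (-3) (-1), vec3 (-1) 1 (-3), vec3 1 (-1) (-3), vec3 (-1) 3 (-1),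
    vec3 1 1 3, vec3 3 (-1) (-1), vec3 1 3 1, vec3 3 1 1]

lemma tw_sum : ∑ i, tw i = 0 := by
  simp only [Fin.sum_univ_succ, Finset.univ_eq_empty, Finset.sum_empty, tw]
  norm_num [Matrix.cons_val_zero, Matrix.cons_val_succ, Matrix.cons_val_two, vec3_add, vec3_neg, vec3_zero]

lemma tw_avg : tupleAvg 12 tw = vec3 132 88 0 := by
  unfold tupleAvg
  simp only [Fin.sum_univ_succ, Finset.univ_eq_empty, Finset.sum_empty, tw]
  norm_num [Matrix.cons_val_zero, Matrix.cons_val_succ, Matrix.cons_val_two, vec3_add, vec3_smul, vec3_neg, vec3_ext]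

lemma tw_key : ∀ i : Fin 12, 3 * tw i 0 + 2 * tw i 1 = 2 * (i:ℝ) - 11 := by
  intro i; fin_cases i <;> norm_num [tw, vec3]

lemma tw_inj : Function.Injective tw := by
  intro a b h
  have ha := tw_key a
  have hb := tw_key b
  rw [h] at ha
  have : (a:ℝ) = (b:ℝ) := by rw [hb] at ha; linarith
  exact Fin.ext (Nat.cast_injective this)

lemma sum_transport {α : Type*} [AddCommMonoid α] {v w : Fin 12 → E3}
    (hv : Function.Injective v) (hw : Function.Injective w)
    (hr : Set.range v = Set.range w) (f : E3 → α) :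
    ∑ i, f (v i) = ∑ i, f (w i) := by
  let e : Fin 12 ≃ Fin 12 :=
    (Equiv.ofInjective v hv).trans ((Equiv.setCongr hr).trans (Equiv.ofInjective w hw).symm)
  have he : ∀ i, w (e i) = v i := by
    intro i
    show w ((Equiv.ofInjective w hw).symm (Equiv.setCongr hr (Equiv.ofInjective v hv i))) = v i
    rw [Equiv.apply_ofInjective_symm hw]
    rfl
  calc ∑ i, f (v i) = ∑ i, f (w (e i)) := by simp_rw [he]
    _ = ∑ i, f (w i) := Equiv.sum_comp e fun i => f (w i)

lemma tw_innersq (z : E3) : ∑ i, ⟪tw i, z⟫^2 = 44 * ‖z‖^2 := by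
  simp only [Fin.sum_univ_succ, Finset.univ_eq_empty, Finset.sum_empty, tw,
    Matrix.cons_val_zero, Matrix.cons_val_succ, inner_vec3, norm_sq_z]
  ring

/-- The key upper bound, via Cauchy–Schwarz and `∑ a aᵀ = 44 I`, `∑ a = 0`. -/
lemma main_ub (v : Fin 12 → E3) (hv : Function.Injective v)
    (hr : Set.range v = Set.range tw) : ‖tupleAvg 12 v‖^2 ≤ 25168 := by
  set W := tupleAvg 12 v with hWdef
  have hsum0 : ∑ i, v i = 0 := by
    have := sum_transport hv tw_inj hr id
    simpa [tw_sum] using this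
  have hW : ‖W‖^2 = ∑ i : Fin 12, (2*(i:ℝ)-11) * ⟪v i, W⟫ := by
    rw [← real_inner_self_eq_norm_sq]
    have h1 : ⟪W, W⟫ = ∑ i : Fin 12, (2*(i:ℝ)+3-12) * ⟪v i, W⟫ := by
      have : tupleAvg 12 v = ∑ i : Fin 12, (2*(i:ℝ)+3-12) • v i := rfl
      calc ⟪W, W⟫ = ⟪∑ i : Fin 12, (2*(i:ℝ)+3-12) • v i, W⟫ := by rw [hWdef, this]
        _ = ∑ i : Fin 12, ⟪(2*(i:ℝ)+3-12) • v i, W⟫ := sum_inner _ _ _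
        _ = ∑ i : Fin 12, (2*(i:ℝ)+3-12) * ⟪v i, W⟫ :=
            Finset.sum_congr rfl fun i _ => real_inner_smul_left _ _ _
    rw [h1]
    have h2 : ∑ i : Fin 12, (2*(i:ℝ)+3-12) * ⟪v i, W⟫
        = ∑ i : Fin 12, (2*(i:ℝ)-11) * ⟪v i, W⟫ + 2 * ⟪∑ i, v i, W⟫ := by
      rw [sum_inner, Finset.mul_sum, ← Finset.sum_add_distrib]
      exact Finset.sum_congr rfl fun i _ => by ring
    rw [h2, hsum0, inner_zero_left]
    ring
  have hcs := Finset.sum_mul_sq_le_sq_mul_sq Finset.univ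
    (fun i : Fin 12 => 2*(i:ℝ)-11) (fun i => ⟪v i, W⟫)
  have h572 : ∑ i : Fin 12, (2*(i:ℝ)-11)^2 = 572 := by
    simp [Fin.sum_univ_succ]
    norm_num
  have h44 : ∑ i : Fin 12, ⟪v i, W⟫^2 = 44 * ‖W‖^2 := by
    have := sum_transport hv tw_inj hr (fun a => ⟪a, W⟫^2)
    rw [this, tw_innersq]
  rw [h572, h44, ← hW] at hcs
  nlinarith [sq_nonneg ‖W‖, norm_nonneg W]

lemma mem_tt (a b c : ℝ) (σ : Equiv.Perm (Fin 3)) (s : Fin 3 → ℝ)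
    (hs : ∀ i, s i = 1 ∨ s i = -1) (hp : s 0 * s 1 * s 2 = 1)
    (h0 : a = s 0 * ![1,1,3] (σ 0)) (h1 : b = s 1 * ![1,1,3] (σ 1))
    (h2 : c = s 2 * ![1,1,3] (σ 2)) :
    vec3 a b c ∈ truncatedTetrahedron := by
  refine ⟨σ, s, hs, hp, ?_⟩
  unfold vec3
  congr 1
  funext i
  fin_cases i
  · exact h0
  · exact h1
  · exact h2

lemma tt_sub : truncatedTetrahedron ⊆ Set.range tw := by
  rintro x ⟨σ, s, hs, hp, rfl⟩
  have hsym : (WithLp.equiv 2 (Fin 3 → ℝ)).symm (fun i => s i * ![1,1,3] (σ i)) =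
      vec3 (s 0 * ![1,1,3] (σ 0)) (s 1 * ![1,1,3] (σ 1)) (s 2 * ![1,1,3] (σ 2)) := by
    unfold vec3; congr 1; funext i; fin_cases i <;> rfl
  rw [hsym]
  have e3 : ∀ t : Fin 3, t = 0 ∨ t = 1 ∨ t = 2 := by decide
  rcases hs 0 with h0|h0 <;> rcases hs 1 with h1|h1 <;> rcases hs 2 with h2|h2 <;>
  rcases e3 (σ 0) with ha|ha|ha <;> rcases e3 (σ 1) with hb|hb|hb <;>
  rcases e3 (σ 2) with hc|hc|hc <;>
  first
    | (rw [h0, h1, h2] at hp; norm_num at hp; done)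
    | exact absurd (σ.injective (ha.trans hb.symm)) (by decide)
    | exact absurd (σ.injective (ha.trans hc.symm)) (by decide)
    | exact absurd (σ.injective (hb.trans hc.symm)) (by decide)
    | (rw [h0, h1, h2, ha, hb, hc]
       norm_num
       first
        | exact ⟨0, rfl⟩
        | exact ⟨1, rfl⟩
        | exact ⟨2, rfl⟩
        | exact ⟨3, rfl⟩
        | exact ⟨4, rfl⟩
        | exact ⟨5, rfl⟩
        | exact ⟨6, rfl⟩
        | exact ⟨7, rfl⟩
        | exact ⟨8, rfl⟩
        | exact ⟨9, rfl⟩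
        | exact ⟨10, rfl⟩
        | exact ⟨11, rfl⟩)

lemma tw_mem : ∀ i, tw i ∈ truncatedTetrahedron := by
  intro i
  fin_cases i
  · exact mem_tt _ _ _ (Equiv.swap 0 2) ![-1,-1,1] (by intro i; fin_cases i <;> norm_num [Matrix.cons_val_two]) (by norm_num [Matrix.cons_val_two])
      (by norm_num [Equiv.swap_apply_def, Fin.ext_iff, Matrix.cons_val_two]) (by norm_num [Equiv.swap_apply_def, Fin.ext_iff, Matrix.cons_val_two]) (by norm_num [Equiv.swap_apply_def, Fin.ext_iff, Matrix.cons_val_two])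
  · exact mem_tt _ _ _ (Equiv.swap 1 2) ![-1,-1,1] (by intro i; fin_cases i <;> norm_num [Matrix.cons_val_two]) (by norm_num [Matrix.cons_val_two])
      (by norm_num [Equiv.swap_apply_def, Fin.ext_iff, Matrix.cons_val_two]) (by norm_num [Equiv.swap_apply_def, Fin.ext_iff, Matrix.cons_val_two]) (by norm_num [Equiv.swap_apply_def, Fin.ext_iff, Matrix.cons_val_two])
  · exact mem_tt _ _ _ (Equiv.swap 0 2) ![-1,1,-1] (by intro i; fin_cases i <;> norm_num [Matrix.cons_val_two]) (by norm_num [Matrix.cons_val_two])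
      (by norm_num [Equiv.swap_apply_def, Fin.ext_iff, Matrix.cons_val_two]) (by norm_num [Equiv.swap_apply_def, Fin.ext_iff, Matrix.cons_val_two]) (by norm_num [Equiv.swap_apply_def, Fin.ext_iff, Matrix.cons_val_two])
  · exact mem_tt _ _ _ (Equiv.refl _) ![-1,-1,1] (by intro i; fin_cases i <;> norm_num [Matrix.cons_val_two]) (by norm_num [Matrix.cons_val_two])
      (by norm_num [Equiv.swap_apply_def, Fin.ext_iff, Matrix.cons_val_two]) (by norm_num [Equiv.swap_apply_def, Fin.ext_iff, Matrix.cons_val_two]) (by norm_num [Equiv.swap_apply_def, Fin.ext_iff, Matrix.cons_val_two])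
  · exact mem_tt _ _ _ (Equiv.swap 1 2) ![1,-1,-1] (by intro i; fin_cases i <;> norm_num [Matrix.cons_val_two]) (by norm_num [Matrix.cons_val_two])
      (by norm_num [Equiv.swap_apply_def, Fin.ext_iff, Matrix.cons_val_two]) (by norm_num [Equiv.swap_apply_def, Fin.ext_iff, Matrix.cons_val_two]) (by norm_num [Equiv.swap_apply_def, Fin.ext_iff, Matrix.cons_val_two])
  · exact mem_tt _ _ _ (Equiv.refl _) ![-1,1,-1] (by intro i; fin_cases i <;> norm_num [Matrix.cons_val_two]) (by norm_num [Matrix.cons_val_two])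
      (by norm_num [Equiv.swap_apply_def, Fin.ext_iff, Matrix.cons_val_two]) (by norm_num [Equiv.swap_apply_def, Fin.ext_iff, Matrix.cons_val_two]) (by norm_num [Equiv.swap_apply_def, Fin.ext_iff, Matrix.cons_val_two])
  · exact mem_tt _ _ _ (Equiv.refl _) ![1,-1,-1] (by intro i; fin_cases i <;> norm_num [Matrix.cons_val_two]) (by norm_num [Matrix.cons_val_two])
      (by norm_num [Equiv.swap_apply_def, Fin.ext_iff, Matrix.cons_val_two]) (by norm_num [Equiv.swap_apply_def, Fin.ext_iff, Matrix.cons_val_two]) (by norm_num [Equiv.swap_apply_def, Fin.ext_iff, Matrix.cons_val_two])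
  · exact mem_tt _ _ _ (Equiv.swap 1 2) ![-1,1,-1] (by intro i; fin_cases i <;> norm_num [Matrix.cons_val_two]) (by norm_num [Matrix.cons_val_two])
      (by norm_num [Equiv.swap_apply_def, Fin.ext_iff, Matrix.cons_val_two]) (by norm_num [Equiv.swap_apply_def, Fin.ext_iff, Matrix.cons_val_two]) (by norm_num [Equiv.swap_apply_def, Fin.ext_iff, Matrix.cons_val_two])
  · exact mem_tt _ _ _ (Equiv.refl _) ![1,1,1] (by intro i; fin_cases i <;> norm_num [Matrix.cons_val_two]) (by norm_num [Matrix.cons_val_two])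
      (by norm_num [Equiv.swap_apply_def, Fin.ext_iff, Matrix.cons_val_two]) (by norm_num [Equiv.swap_apply_def, Fin.ext_iff, Matrix.cons_val_two]) (by norm_num [Equiv.swap_apply_def, Fin.ext_iff, Matrix.cons_val_two])
  · exact mem_tt _ _ _ (Equiv.swap 0 2) ![1,-1,-1] (by intro i; fin_cases i <;> norm_num [Matrix.cons_val_two]) (by norm_num [Matrix.cons_val_two])
      (by norm_num [Equiv.swap_apply_def, Fin.ext_iff, Matrix.cons_val_two]) (by norm_num [Equiv.swap_apply_def, Fin.ext_iff, Matrix.cons_val_two]) (by norm_num [Equiv.swap_apply_def, Fin.ext_iff, Matrix.cons_val_two])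
  · exact mem_tt _ _ _ (Equiv.swap 1 2) ![1,1,1] (by intro i; fin_cases i <;> norm_num [Matrix.cons_val_two]) (by norm_num [Matrix.cons_val_two])
      (by norm_num [Equiv.swap_apply_def, Fin.ext_iff, Matrix.cons_val_two]) (by norm_num [Equiv.swap_apply_def, Fin.ext_iff, Matrix.cons_val_two]) (by norm_num [Equiv.swap_apply_def, Fin.ext_iff, Matrix.cons_val_two])
  · exact mem_tt _ _ _ (Equiv.swap 0 2) ![1,1,1] (by intro i; fin_cases i <;> norm_num [Matrix.cons_val_two]) (by norm_num [Matrix.cons_val_two])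
      (by norm_num [Equiv.swap_apply_def, Fin.ext_iff, Matrix.cons_val_two]) (by norm_num [Equiv.swap_apply_def, Fin.ext_iff, Matrix.cons_val_two]) (by norm_num [Equiv.swap_apply_def, Fin.ext_iff, Matrix.cons_val_two])

lemma range_tw : Set.range tw = truncatedTetrahedron :=
  Set.Subset.antisymm (by rintro x ⟨i, rfl⟩; exact tw_mem i) tt_sub

lemma smul_range (r : ℝ) (v : Fin 12 → E3) :
    Set.range (fun i => r • v i) = r • Set.range v := by
  ext x
  simp only [Set.mem_range, Set.mem_smul_set]
  constructor
  · rintro ⟨i, rfl⟩; exact ⟨v i, ⟨i, rfl⟩, rfl⟩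
  · rintro ⟨y, ⟨i, rfl⟩, rfl⟩; exact ⟨i, rfl⟩

lemma tupleAvg_smul (r : ℝ) (v : Fin 12 → E3) :
    tupleAvg 12 (fun i => r • v i) = r • tupleAvg 12 v := by
  unfold tupleAvg
  rw [Finset.smul_sum]
  exact Finset.sum_congr rfl fun i _ => smul_comm _ _ _

lemma norm_sq_smul (r : ℝ) (x : E3) : ‖r • x‖^2 = r^2 * ‖x‖^2 := by
  rw [norm_smul, mul_pow, Real.norm_eq_abs, sq_abs]

theorem truncatedTetrahedron_guesswork :
    IsGreatest (normSqSet truncatedTetrahedron 12) 25168 ∧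
    IsGreatest (normSqSet ((Real.sqrt 11)⁻¹ • truncatedTetrahedron) 12) (25168 / 11) ∧
    |(1 / 2 : ℝ) * (12 + 1 - Real.sqrt (25168 / 11) / 12) - 4.5070| < 0.0001 := by
  have hnorm : ‖tupleAvg 12 tw‖^2 = 25168 := by
    rw [tw_avg, norm_sq_z]
    norm_num [vec3, Matrix.cons_val_two]
  have hs11 : Real.sqrt 11 ≠ 0 := by positivity
  have hr0 : (Real.sqrt 11)⁻¹ ≠ 0 := inv_ne_zero hs11
  have hr2 : ((Real.sqrt 11)⁻¹)^2 = 1/11 := by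
    rw [← Real.sqrt_inv]
    rw [Real.sq_sqrt (by norm_num)]
    norm_num
  refine ⟨⟨⟨tw, tw_inj, range_tw, hnorm.symm⟩, ?_⟩, ⟨⟨fun i => (Real.sqrt 11)⁻¹ • tw i, ?_, ?_, ?_⟩, ?_⟩, ?_⟩
  · -- upper bound, part 1
    rintro x ⟨v, hi, hr, rfl⟩
    exact main_ub v hi (by rw [hr, range_tw])
  · -- injectivity of scaled tuple
    intro a b h
    exact tw_inj (smul_right_injective E3 hr0 h)
  · -- range of scaled tuple
    rw [smul_range, range_tw]
  · -- value
    rw [tupleAvg_smul, norm_sq_smul, hnorm, hr2]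
    norm_num
  · -- upper bound, part 2
    rintro x ⟨v, hi, hr, rfl⟩
    set r := (Real.sqrt 11)⁻¹ with hrdef
    have hv0 : ∀ i, v i = r • (Real.sqrt 11 • v i) := by
      intro i
      rw [smul_smul, hrdef, inv_mul_cancel₀ hs11, one_smul]
    have hinj0 : Function.Injective (fun i => Real.sqrt 11 • v i) := by
      intro a b h
      exact hi (smul_right_injective E3 hs11 h)
    have hrange0 : Set.range (fun i => Real.sqrt 11 • v i) = Set.range tw := by
      rw [smul_range, hr, range_tw, smul_smul, mul_inv_cancel₀ hs11, one_smul]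
    have hle := main_ub _ hinj0 hrange0
    have hveq : v = fun i => r • (Real.sqrt 11 • v i) := funext hv0
    rw [hveq, tupleAvg_smul, norm_sq_smul, hrdef, hr2]
    linarith
  · -- numerics
    have h1 : Real.sqrt (25168/11) < 47.8331 := by
      rw [Real.sqrt_lt' (by norm_num)]
      norm_num
    have h2 : 47.833 < Real.sqrt (25168/11) := by
      rw [show (47.833:ℝ) = √(47.833^2) from (Real.sqrt_sq (by norm_num)).symm]
      apply Real.sqrt_lt_sqrt (by norm_num)
      norm_num
    rw [abs_lt]
    constructor <;> nlinarith
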